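/- arXiv:2311.13771 — 5 statements merged into one kernel-verified Lean document; each statement's English description precedes it below -/
import Mathlib

section
/- Multiplicative Weights Update guarantee: Consider a T-round game with m constraints. Importances satisfy imp¹(i) = 1 and imp^{t+1}(i) = imp^t(i)·(1 + η·gap^t(i)) with η = ε/(3W). Suppose for each round t, gap^t(i) ∈ [0,W] for all i and Σ_{i=1}ᵐ imp^t(i)·gap^t(i) ≤ Σ_{i=1}ᵐ imp^t(i). If T ≥ 9·W·ln(m)/ε² and 0 < ε ≤ 1/2, then for every constraint i, (Σ_{t=1}^T gap^t(i))/T ≤ 1 + ε. -/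
/-!
Every importance is a product `∏ₜ (1 + η gapᵗ(i))`, and since `η gapᵗ(i) ≤ ε/3` each factor is at least
`exp (η gapᵗ(i) / (1 + ε/3))`; so `impᵀ(i) ≥ exp (η Σₜ gapᵗ(i) / (1 + ε/3))`. On the other hand the
oracle condition makes the total importance grow by a factor at most `1 + η ≤ exp η` per round, so
`impᵀ(i) ≤ m exp (η T)`. Taking logarithms, `Σₜ gapᵗ(i) ≤ (1 + ε/3) (3 W ln m / ε + T)`, and the bound
on `T` turns the right-hand side into `(1 + ε/3)² T ≤ (1 + ε) T`.
-/

open Finset Real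

lemma Real.exp_div_one_add_le_one_add {z c : ℝ} (hz : 0 ≤ z) (hzc : z ≤ c) :
    exp (z / (1 + c)) ≤ 1 + z := by
  have h1z : 0 < 1 + z := by linarith
  rw [← le_log_iff_exp_le h1z]
  calc z / (1 + c) ≤ z / (1 + z) := by gcongr
    _ = 1 - (1 + z)⁻¹ := by field_simp; ring
    _ ≤ log (1 + z) := one_sub_inv_le_log_of_pos h1z

lemma Real.one_add_pow_le_exp_mul {x : ℝ} (hx : 0 ≤ 1 + x) (n : ℕ) : (1 + x) ^ n ≤ exp (x * n) := by
  rw [mul_comm, exp_nat_mul]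
  exact pow_le_pow_left₀ hx (by linarith [add_one_le_exp x]) n

lemma Real.exp_sum_div_le_prod_one_add {κ : Type*} {s : Finset κ} {z : κ → ℝ} {c : ℝ}
    (hz : ∀ t ∈ s, 0 ≤ z t ∧ z t ≤ c) :
    exp ((∑ t ∈ s, z t) / (1 + c)) ≤ ∏ t ∈ s, (1 + z t) := by
  rw [sum_div, exp_sum]
  exact prod_le_prod (fun _ _ => (exp_pos _).le) fun t ht =>
    exp_div_one_add_le_one_add (hz t ht).1 (hz t ht).2

lemma Finset.eq_prod_range_of_succ_eq_mul {M : Type*} [CommMonoid M] {w f : ℕ → M} {n : ℕ}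
    (h0 : w 0 = 1) (hsucc : ∀ t < n, w (t + 1) = w t * f t) : w n = ∏ t ∈ range n, f t := by
  induction n with
  | zero => simpa
  | succ n ih => rw [prod_range_succ, hsucc n n.lt_succ_self, ih fun t ht => hsucc t (by omega)]

lemma Finset.sum_mul_one_add_le {ι : Type*} (s : Finset ι) {w g : ι → ℝ} {η : ℝ} (hη : 0 ≤ η)
    (h : ∑ i ∈ s, w i * g i ≤ ∑ i ∈ s, w i) :
    ∑ i ∈ s, w i * (1 + η * g i) ≤ (1 + η) * ∑ i ∈ s, w i := by
  have hexpand : ∑ i ∈ s, w i * (1 + η * g i) = ∑ i ∈ s, w i + η * ∑ i ∈ s, w i * g i := by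
    rw [mul_sum, ← sum_add_distrib]
    exact sum_congr rfl fun i _ => by ring
  rw [hexpand]
  nlinarith

lemma sum_weights_le_pow_mul {ι : Type*} [Fintype ι] {T : ℕ} {η : ℝ} {g w : ℕ → ι → ℝ}
    (hη : 0 ≤ η) (hrec : ∀ t < T, ∀ i, w (t + 1) i = w t i * (1 + η * g t i))
    (horacle : ∀ t < T, ∑ i, w t i * g t i ≤ ∑ i, w t i) :
    ∑ i, w T i ≤ (1 + η) ^ T * ∑ i, w 0 i :=
  le_geom (u := fun t => ∑ i, w t i) (by linarith) T fun t ht => by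
    simpa only [hrec t ht] using sum_mul_one_add_le univ hη (horacle t ht)

lemma div_le_one_add_of_log_bound {W ε L S T : ℝ} (hW : 0 < W) (hε0 : 0 < ε) (hε : ε ≤ 3)
    (hT0 : 0 ≤ T) (hT : 9 * W * L / ε ^ 2 ≤ T)
    (h : ε / (3 * W) * S / (1 + ε / 3) ≤ L + ε / (3 * W) * T) :
    S / T ≤ 1 + ε := by
  have hS : ε * S ≤ (1 + ε / 3) * (3 * W * L + ε * T) := by
    rw [div_le_iff₀ (by positivity)] at h
    field_simp at h
    nlinarith
  have hL : 3 * W * L ≤ ε ^ 2 * T / 3 := by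
    rw [div_le_iff₀ (by positivity)] at hT
    linarith
  have hS' : S ≤ (1 + ε / 3) ^ 2 * T := by
    refine le_of_mul_le_mul_left ?_ hε0
    nlinarith
  have hsq : (1 + ε / 3) ^ 2 ≤ 1 + ε := by nlinarith
  exact div_le_of_le_mul₀ hT0 (by linarith) (hS'.trans (by gcongr))

theorem mwu_guarantee_general (m T : ℕ) (W ε η : ℝ) (hW : 0 < W)
    (hε0 : 0 < ε) (hε : ε ≤ 1 / 2) (hη : η = ε / (3 * W))
    (gap : ℕ → Fin m → ℝ) (imp : ℕ → Fin m → ℝ)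
    (himp0 : ∀ i, imp 0 i = 1)
    (himprec : ∀ t, t < T → ∀ i, imp (t + 1) i = imp t i * (1 + η * gap t i))
    (hgap : ∀ t, t < T → ∀ i, 0 ≤ gap t i ∧ gap t i ≤ W)
    (horacle : ∀ t, t < T → ∑ i, imp t i * gap t i ≤ ∑ i, imp t i)
    (hT : (T : ℝ) ≥ 9 * W * Real.log m / ε ^ 2) :
    ∀ i : Fin m, (∑ t ∈ Finset.range T, gap t i) / T ≤ 1 + ε := by
  intro i
  have hη0 : 0 ≤ η := hη ▸ by positivity
  have hηW : η * W = ε / 3 := by rw [hη]; field_simp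
  have hstep : ∀ t < T, ∀ j, 0 ≤ η * gap t j ∧ η * gap t j ≤ ε / 3 := fun t ht j =>
    ⟨mul_nonneg hη0 (hgap t ht j).1, hηW ▸ mul_le_mul_of_nonneg_left (hgap t ht j).2 hη0⟩
  have hprod : ∀ j, imp T j = ∏ t ∈ range T, (1 + η * gap t j) := fun j =>
    eq_prod_range_of_succ_eq_mul (w := (imp · j)) (himp0 j) fun t ht => himprec t ht j
  have hlow : exp (η * (∑ t ∈ range T, gap t i) / (1 + ε / 3)) ≤ imp T i := by
    rw [hprod, mul_sum]
    exact exp_sum_div_le_prod_one_add fun t ht => hstep t (mem_range.1 ht) i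
  have hup : imp T i ≤ m * exp (η * T) := calc
    imp T i ≤ ∑ j, imp T j := single_le_sum (fun j _ => hprod j ▸ prod_nonneg fun t ht =>
        by linarith [(hstep t (mem_range.1 ht) j).1]) (mem_univ i)
    _ ≤ (1 + η) ^ T * ∑ j, imp 0 j := sum_weights_le_pow_mul hη0 himprec horacle
    _ ≤ m * exp (η * T) := by
        simp only [himp0, sum_const, card_univ, Fintype.card_fin, nsmul_eq_mul, mul_one]
        rw [mul_comm]
        gcongr
        exact one_add_pow_le_exp_mul (by linarith) T
  have hm : (0 : ℝ) < m := by exact_mod_cast i.pos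
  refine div_le_one_add_of_log_bound hW hε0 (by linarith) T.cast_nonneg hT ?_
  rw [← hη, ← exp_le_exp, exp_add, exp_log hm]
  exact hlow.trans hup

/-- Multiplicative Weights Update guarantee. -/
theorem mwu_guarantee (m T : ℕ) (hm : 2 ≤ m) (W ε η : ℝ) (hW : 0 < W)
    (hε0 : 0 < ε) (hε : ε ≤ 1 / 2) (hη : η = ε / (3 * W))
    (gap : ℕ → Fin m → ℝ) (imp : ℕ → Fin m → ℝ)
    (himp0 : ∀ i, imp 0 i = 1)
    (himprec : ∀ t, t < T → ∀ i, imp (t + 1) i = imp t i * (1 + η * gap t i))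
    (hgap : ∀ t, t < T → ∀ i, 0 ≤ gap t i ∧ gap t i ≤ W)
    (horacle : ∀ t, t < T → ∑ i, imp t i * gap t i ≤ ∑ i, imp t i)
    (hT : (T : ℝ) ≥ 9 * W * Real.log m / ε ^ 2) :
    ∀ i : Fin m, (∑ t ∈ Finset.range T, gap t i) / T ≤ 1 + ε :=
  mwu_guarantee_general m T W ε η hW hε0 hε hη gap imp himp0 himprec hgap horacle hT
end

section
/- Let a ∈ ℝⁿ with Σⱼ aⱼ² > 0, M ≥ 2, Δ = 1000·√((Σⱼ aⱼ²)·log M), λ = Δ/(100·Σⱼ aⱼ²), and χ ∈ {-1,1}ⁿ. If Σ_{j=1}ⁿ aⱼχⱼ ≥ Δ, then ∏_{j=1}ⁿ (1 + λ·aⱼχⱼ + λ²aⱼ²) ≥ M^{1000}. -/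
/-- Key pointwise bound: `1 + x + x²` dominates `exp` of a suitably penalized argument. -/
lemma exp_penalized_le (x : ℝ) :
    Real.exp (x - 2 * |x| * (if 1/2 < |x| then 1 else 0)) ≤ 1 + x + x ^ 2 := by
  split_ifs with h
  · rcases le_or_gt 0 x with hx | hx
    · rw [abs_of_nonneg hx]
      have h1 : Real.exp (x - 2 * x * 1) ≤ Real.exp 0 := by
        apply Real.exp_le_exp.2; nlinarith
      rw [Real.exp_zero] at h1
      nlinarith
    · rw [abs_of_neg hx]
      have hx2 : x ≤ -(1/2) := by rw [abs_of_neg hx] at h; linarith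
      have h1 : Real.exp (x - 2 * -x * 1) ≤ Real.exp (-(3/2)) := by
        apply Real.exp_le_exp.2; linarith
      have h2 : Real.exp (-(3/2)) * Real.exp ((3:ℝ)/2) = 1 := by
        rw [← Real.exp_add]; norm_num
      have h3 : (3:ℝ)/2 + 1 ≤ Real.exp ((3:ℝ)/2) := Real.add_one_le_exp _
      have h4 : Real.exp (-(3/2)) ≤ (3:ℝ)/4 := by
        nlinarith [Real.exp_pos (-(3/2) : ℝ)]
      nlinarith
  · push_neg at h
    simp only [mul_zero, sub_zero]
    have hb := Real.exp_bound (x := x) (by linarith) (n := 2) (by norm_num)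
    have hsum : ∑ m ∈ Finset.range 2, x ^ m / (m.factorial : ℝ) = 1 + x := by
      simp [Finset.sum_range_succ]
    rw [hsum] at hb
    have hb' := (abs_sub_le_iff.1 hb).1
    have habs : |x| ^ 2 = x ^ 2 := sq_abs x
    norm_num at hb'
    nlinarith [sq_abs x, abs_nonneg x, sq_nonneg x]

/-- If the signed discrepancy exceeds `Δ`, the upper exponential potential is huge. -/
theorem exp_potential_large_of_disc_large (n : ℕ) (a χ : Fin n → ℝ) (M Δ lam : ℝ)
    (ha : 0 < ∑ j, (a j) ^ 2) (hM : 2 ≤ M)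
    (hΔ : Δ = 1000 * Real.sqrt ((∑ j, (a j) ^ 2) * Real.log M))
    (hlam : lam = Δ / (100 * ∑ j, (a j) ^ 2))
    (hχ : ∀ j, χ j = 1 ∨ χ j = -1)
    (hdisc : ∑ j, a j * χ j ≥ Δ) :
    ∏ j, (1 + lam * a j * χ j + lam ^ 2 * (a j) ^ 2) ≥ M ^ (1000 : ℕ) := by
  set S := ∑ j, (a j) ^ 2 with hS
  have hL : 0 < Real.log M := Real.log_pos (by linarith)
  have hSL : 0 < S * Real.log M := mul_pos ha hL
  have hΔpos : 0 < Δ := by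
    rw [hΔ]; positivity
  have hΔsq : Δ ^ 2 = 1000000 * (S * Real.log M) := by
    rw [hΔ, mul_pow, Real.sq_sqrt hSL.le]; ring
  have hlampos : 0 < lam := by
    rw [hlam]; positivity
  -- penalized exponent for each term
  set x : Fin n → ℝ := fun j => lam * a j * χ j with hx
  have hχsq : ∀ j, (χ j) ^ 2 = 1 := by
    intro j; rcases hχ j with h | h <;> rw [h] <;> norm_num
  have hxsq : ∀ j, (x j) ^ 2 = lam ^ 2 * (a j) ^ 2 := by
    intro j; rw [hx]; simp only
    have := hχsq j; nlinarith
  -- each factor dominates exp of penalized term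
  have hfac : ∀ j ∈ Finset.univ, Real.exp (x j - 2 * |x j| * (if 1/2 < |x j| then 1 else 0))
      ≤ 1 + lam * a j * χ j + lam ^ 2 * (a j) ^ 2 := by
    intro j _
    calc Real.exp (x j - 2 * |x j| * (if 1/2 < |x j| then 1 else 0))
        ≤ 1 + x j + (x j) ^ 2 := exp_penalized_le (x j)
      _ = 1 + lam * a j * χ j + lam ^ 2 * (a j) ^ 2 := by rw [hxsq j]
  have hprod : ∏ j, Real.exp (x j - 2 * |x j| * (if 1/2 < |x j| then 1 else 0))
      ≤ ∏ j, (1 + lam * a j * χ j + lam ^ 2 * (a j) ^ 2) :=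
    Finset.prod_le_prod (fun j _ => (Real.exp_pos _).le) hfac
  rw [← Real.exp_sum] at hprod
  -- bound the penalty sum
  have hpen : ∀ j ∈ Finset.univ, 2 * |x j| * (if 1/2 < |x j| then 1 else 0)
      ≤ 4 * lam ^ 2 * (a j) ^ 2 := by
    intro j _
    split_ifs with h
    · have h1 : |x j| ≤ 2 * (x j) ^ 2 := by nlinarith [sq_abs (x j)]
      rw [hxsq j] at h1; linarith
    · simp only [mul_zero]; positivity
  have hpensum : ∑ j, 2 * |x j| * (if 1/2 < |x j| then 1 else 0) ≤ 4 * lam ^ 2 * S := by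
    calc ∑ j, 2 * |x j| * (if 1/2 < |x j| then 1 else 0)
        ≤ ∑ j, 4 * lam ^ 2 * (a j) ^ 2 := Finset.sum_le_sum hpen
      _ = 4 * lam ^ 2 * S := by rw [Finset.mul_sum]
  have hxsum : lam * Δ ≤ ∑ j, x j := by
    have : ∑ j, x j = lam * ∑ j, a j * χ j := by
      rw [Finset.mul_sum]; apply Finset.sum_congr rfl; intro j _; ring
    rw [this]
    exact mul_le_mul_of_nonneg_left hdisc hlampos.le
  have hlamΔ : lam * Δ = 10000 * Real.log M := by
    rw [hlam]
    field_simp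
    nlinarith
  have hlam2S : lam ^ 2 * S = 100 * Real.log M := by
    rw [hlam]
    field_simp
    nlinarith
  have hexp : 1000 * Real.log M ≤ ∑ j, (x j - 2 * |x j| * (if 1/2 < |x j| then 1 else 0)) := by
    rw [Finset.sum_sub_distrib]
    have : 4 * lam ^ 2 * S = 400 * Real.log M := by rw [mul_assoc, hlam2S]; ring
    nlinarith
  have hMpow : (M : ℝ) ^ (1000 : ℕ) = Real.exp (1000 * Real.log M) := by
    rw [← Real.exp_log (show (0:ℝ) < M by linarith), ← Real.exp_nat_mul]
    norm_num
  calc (M : ℝ) ^ (1000 : ℕ) = Real.exp (1000 * Real.log M) := hMpow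
    _ ≤ Real.exp (∑ j, (x j - 2 * |x j| * (if 1/2 < |x j| then 1 else 0))) :=
        Real.exp_le_exp.2 hexp
    _ ≤ _ := hprod
end

section
/- Sequential derandomization with averaging (existence form): Let m, n ∈ ℕ, M ≥ max(m,2), A ∈ ℝ^{m×n}, and imp ∈ ℝ_{≥0}^m. There exists a vector χ ∈ {-1,1}ⁿ such that (1) Σ_{i=1}^m impᵢ·(Σ_{j=1}^n aᵢⱼχⱼ)² ≤ (1 + 1/M)·Σ_{i=1}^m impᵢ·(Σ_{j=1}^n aᵢⱼ²), and (2) for every i ∈ [m], (Σ_{j=1}^n aᵢⱼχⱼ)² ≤ C·log(M)·Σ_{j=1}^n aᵢⱼ², for an absolute constant C > 0. -/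
/-!
Average over all `2 ^ n` sign vectors `χ`. The weighted squared discrepancy
`∑ i, imp i * (∑ j, A i j * χ j) ^ 2` has mean exactly `∑ i, imp i * ∑ j, A i j ^ 2`,
because distinct signs are orthogonal; so by Markov's inequality (1) fails for at most a
fraction `M / (M + 1)` of them. Since `cosh x ≤ exp (x ^ 2 / 2)`, the Chernoff bound shows that
row `i` violates (2) with `C = 8` for at most a fraction `2 * M⁻⁴` of them. As
`M / (M + 1) + 2 * m * M⁻⁴ < 1` when `m ≤ M` and `2 ≤ M`, some sign vector satisfies
everything.
-/

open Finset Real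

section Counting

variable {α : Type*} [Fintype α]

lemma mul_card_le_sum_of_le {X : α → ℝ} (hX : ∀ x, 0 ≤ X x) {s : Finset α} {c : ℝ}
    (hs : ∀ x ∈ s, c ≤ X x) : c * #s ≤ ∑ x, X x :=
  calc c * #s = ∑ _x ∈ s, c := by rw [sum_const, nsmul_eq_mul, mul_comm]
    _ ≤ ∑ x ∈ s, X x := sum_le_sum hs
    _ ≤ ∑ x, X x := sum_le_sum_of_subset_of_nonneg (subset_univ s) fun x _ _ => hX x

lemma mul_card_filter_mul_lt_le {X : α → ℝ} (hX : ∀ x, 0 ≤ X x) {μ : ℝ} (hμ : 0 ≤ μ)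
    (hsum : ∑ x, X x = Fintype.card α * μ) (c : ℝ) :
    c * #{x | c * μ < X x} ≤ Fintype.card α := by
  rcases hμ.eq_or_lt with rfl | hμ
  · have hX0 : ∀ x, X x = 0 := by
      simpa [sum_eq_zero_iff_of_nonneg fun x _ => hX x] using hsum
    simp [hX0]
  · have hmarkov := mul_card_le_sum_of_le hX (s := {x | c * μ < X x})
      fun x hx => (mem_filter.1 hx).2.le
    rw [hsum] at hmarkov
    exact le_of_mul_le_mul_right (by linarith) hμ

lemma exists_forall_notMem_of_card_add_sum_card_lt [DecidableEq α] {κ : Type*} [Fintype κ]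
    (B₀ : Finset α) (B : κ → Finset α) (h : (#B₀ : ℝ) + ∑ i, (#(B i) : ℝ) < Fintype.card α) :
    ∃ x, x ∉ B₀ ∧ ∀ i, x ∉ B i := by
  have hcard : #(B₀ ∪ univ.biUnion B) < #(univ : Finset α) := by
    have hle := (card_union_le B₀ _).trans
      (Nat.add_le_add_left (card_biUnion_le (s := univ) (t := B)) _)
    rw [card_univ]
    exact hle.trans_lt (by exact_mod_cast h)
  obtain ⟨x, -, hx⟩ := exists_mem_notMem_of_card_lt_card hcard
  simp only [mem_union, mem_biUnion, mem_univ, true_and, not_or, not_exists] at hx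
  exact ⟨x, hx⟩

end Counting

noncomputable def signOf (b : Bool) : ℝ := if b then 1 else -1

lemma signOf_eq_one_or_neg_one (b : Bool) : signOf b = 1 ∨ signOf b = -1 := by
  cases b <;> simp [signOf]

section SignVectors

variable {ι : Type*} [Fintype ι] [DecidableEq ι]

noncomputable def signedSum (a : ι → ℝ) (f : ι → Bool) : ℝ := ∑ j, a j * signOf (f j)

lemma sum_prod_apply_bool (g : ι → Bool → ℝ) :
    ∑ f : ι → Bool, ∏ j, g j (f j) = ∏ j, (g j true + g j false) := by
  rw [← Fintype.prod_sum]
  simp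

lemma sum_signOf_mul_signOf (j k : ι) :
    ∑ f : ι → Bool, signOf (f j) * signOf (f k)
      = if j = k then 2 ^ Fintype.card ι else 0 := by
  split_ifs with hjk
  · subst hjk
    have hsq : ∀ b, signOf b * signOf b = 1 := by simp [signOf]
    simp [hsq]
  · have hprod : ∀ f : ι → Bool, signOf (f j) * signOf (f k)
        = ∏ l, if l ∈ ({j, k} : Finset ι) then signOf (f l) else 1 := by
      intro f
      rw [Fintype.prod_ite_mem, prod_pair hjk]
    rw [Fintype.sum_congr _ _ hprod,
      sum_prod_apply_bool fun l b => if l ∈ ({j, k} : Finset ι) then signOf b else 1]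
    -- the factor at `j` is `signOf true + signOf false = 0`
    exact prod_eq_zero (mem_univ j) (by simp [signOf])

lemma sum_signedSum_sq (a : ι → ℝ) :
    ∑ f : ι → Bool, signedSum a f ^ 2 = 2 ^ Fintype.card ι * ∑ j, a j ^ 2 := by
  calc ∑ f : ι → Bool, signedSum a f ^ 2
      = ∑ j, ∑ k, a j * a k * ∑ f : ι → Bool, signOf (f j) * signOf (f k) := by
        simp_rw [signedSum, sq, sum_mul_sum, mul_sum]
        rw [sum_comm]
        refine sum_congr rfl fun j _ => ?_
        rw [sum_comm]
        exact sum_congr rfl fun k _ => sum_congr rfl fun f _ => by ring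
    _ = 2 ^ Fintype.card ι * ∑ j, a j ^ 2 := by
        simp [sum_signOf_mul_signOf, mul_sum, sq, mul_comm]

lemma sum_exp_mul_signedSum_le (a : ι → ℝ) (t : ℝ) :
    ∑ f : ι → Bool, exp (t * signedSum a f)
      ≤ 2 ^ Fintype.card ι * exp (t ^ 2 * (∑ j, a j ^ 2) / 2) := by
  have hfactor : ∀ f : ι → Bool,
      exp (t * signedSum a f) = ∏ j, exp (t * a j * signOf (f j)) := by
    intro f
    simp_rw [signedSum, mul_sum, exp_sum, mul_assoc]
  rw [Fintype.sum_congr _ _ hfactor, sum_prod_apply_bool fun j b => exp (t * a j * signOf b)]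
  calc ∏ j, (exp (t * a j * signOf true) + exp (t * a j * signOf false))
      = ∏ j, 2 * cosh (t * a j) := by simp [signOf, cosh_eq, mul_div_cancel₀]
    _ ≤ ∏ j, 2 * exp ((t * a j) ^ 2 / 2) :=
        prod_le_prod (fun j _ => by positivity) fun j _ => by
          gcongr; exact cosh_le_exp_half_sq _
    _ = 2 ^ Fintype.card ι * exp (t ^ 2 * (∑ j, a j ^ 2) / 2) := by
        rw [prod_mul_distrib, prod_const, card_univ, ← exp_sum, mul_sum, sum_div]
        simp_rw [mul_pow]

lemma card_filter_lt_signedSum_sq_le (a : ι → ℝ) {K : ℝ} (hK : 0 ≤ K) :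
    (#{f : ι → Bool | K * ∑ j, a j ^ 2 < signedSum a f ^ 2} : ℝ)
      ≤ 2 * 2 ^ Fintype.card ι * exp (-(K / 2)) := by
  set v := ∑ j, a j ^ 2 with hv
  rcases (sum_nonneg fun j _ => sq_nonneg (a j) : 0 ≤ v).eq_or_lt with hv0 | hv0
  · have ha : ∀ j, a j = 0 := fun j => by
      simpa using
        (sum_eq_zero_iff_of_nonneg fun j _ => sq_nonneg (a j)).1 hv0.symm j (mem_univ j)
    simp [signedSum, ha, v]
    positivity
  set t := √(K / v)
  have ht : t ^ 2 * v = K := by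
    rw [sq_sqrt (by positivity), div_mul_cancel₀ _ hv0.ne']
  have hbad : ∀ f ∈ ({f : ι → Bool | K * v < signedSum a f ^ 2} : Finset _),
      exp K ≤ exp (t * signedSum a f) + exp (-(t * signedSum a f)) := by
    intro f hf
    have hK2 : K ^ 2 ≤ (t * signedSum a f) ^ 2 := by
      have hlt := (mem_filter.1 hf).2
      rw [mul_pow, ← ht]
      nlinarith [sq_nonneg t]
    calc exp K ≤ exp |t * signedSum a f| := by
          gcongr; simpa [abs_of_nonneg hK] using sq_le_sq.1 hK2
      _ ≤ _ := exp_abs_le _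
  have hmarkov := mul_card_le_sum_of_le (fun f => by positivity) hbad
  have hmgf : ∑ f : ι → Bool, (exp (t * signedSum a f) + exp (-(t * signedSum a f)))
      ≤ 2 * 2 ^ Fintype.card ι * exp (K / 2) := by
    have hpos := sum_exp_mul_signedSum_le a t
    have hneg := sum_exp_mul_signedSum_le a (-t)
    simp only [neg_mul, neg_sq, ← hv, ht] at hpos hneg
    rw [sum_add_distrib]
    linarith
  calc (#{f : ι → Bool | K * v < signedSum a f ^ 2} : ℝ)
      = exp (-K) * (exp K * #{f : ι → Bool | K * v < signedSum a f ^ 2}) := by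
        rw [← mul_assoc, ← exp_add, neg_add_cancel, exp_zero, one_mul]
    _ ≤ exp (-K) * (2 * 2 ^ Fintype.card ι * exp (K / 2)) :=
        mul_le_mul_of_nonneg_left (hmarkov.trans hmgf) (exp_pos _).le
    _ = 2 * 2 ^ Fintype.card ι * exp (-(K / 2)) := by
        rw [mul_left_comm, ← exp_add]; ring_nf

variable {κ : Type*} [Fintype κ]

lemma sum_sum_mul_signedSum_sq (a : κ → ι → ℝ) (w : κ → ℝ) :
    ∑ f : ι → Bool, ∑ i, w i * signedSum (a i) f ^ 2
      = 2 ^ Fintype.card ι * ∑ i, w i * ∑ j, a i j ^ 2 := by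
  rw [sum_comm, mul_sum]
  exact sum_congr rfl fun i _ => by rw [← mul_sum, sum_signedSum_sq]; ring

lemma mul_card_filter_lt_sum_mul_signedSum_sq_le (a : κ → ι → ℝ) {w : κ → ℝ}
    (hw : ∀ i, 0 ≤ w i) (c : ℝ) :
    c * #{f : ι → Bool | c * ∑ i, w i * ∑ j, a i j ^ 2 < ∑ i, w i * signedSum (a i) f ^ 2}
      ≤ (2 : ℝ) ^ Fintype.card ι := by
  have hX : ∀ f : ι → Bool, 0 ≤ ∑ i, w i * signedSum (a i) f ^ 2 :=
    fun f => sum_nonneg fun i _ => mul_nonneg (hw i) (sq_nonneg _)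
  have hμ : 0 ≤ ∑ i, w i * ∑ j, a i j ^ 2 :=
    sum_nonneg fun i _ => mul_nonneg (hw i) (sum_nonneg fun j _ => sq_nonneg _)
  simpa using mul_card_filter_mul_lt_le hX hμ (by simpa using sum_sum_mul_signedSum_sq a w) c

lemma exists_signs_sum_mul_sq_le_and_sq_le (a : κ → ι → ℝ) {w : κ → ℝ} (hw : ∀ i, 0 ≤ w i)
    {c K : ℝ} (hc : 0 < c) (hK : 0 ≤ K)
    (hbudget : c⁻¹ + Fintype.card κ * (2 * exp (-(K / 2))) < 1) :
    ∃ f : ι → Bool,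
      ∑ i, w i * signedSum (a i) f ^ 2 ≤ c * ∑ i, w i * ∑ j, a i j ^ 2 ∧
      ∀ i, signedSum (a i) f ^ 2 ≤ K * ∑ j, a i j ^ 2 := by
  set B₀ : Finset (ι → Bool) :=
    {f | c * ∑ i, w i * ∑ j, a i j ^ 2 < ∑ i, w i * signedSum (a i) f ^ 2}
  set B : κ → Finset (ι → Bool) :=
    fun i => {f | K * ∑ j, a i j ^ 2 < signedSum (a i) f ^ 2}
  have hB₀ : (#B₀ : ℝ) ≤ c⁻¹ * 2 ^ Fintype.card ι := by
    rw [le_inv_mul_iff₀ hc]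
    exact mul_card_filter_lt_sum_mul_signedSum_sq_le a hw c
  have hB : ∑ i, (#(B i) : ℝ) ≤ Fintype.card κ * (2 * exp (-(K / 2))) * 2 ^ Fintype.card ι :=
    calc ∑ i, (#(B i) : ℝ) ≤ ∑ _i : κ, 2 * 2 ^ Fintype.card ι * exp (-(K / 2)) :=
          sum_le_sum fun i _ => card_filter_lt_signedSum_sq_le (a i) hK
      _ = _ := by rw [sum_const, card_univ, nsmul_eq_mul]; ring
  have hcount : (#B₀ : ℝ) + ∑ i, (#(B i) : ℝ) < Fintype.card (ι → Bool) := by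
    rw [Fintype.card_fun, Fintype.card_bool, Nat.cast_pow, Nat.cast_ofNat]
    calc (#B₀ : ℝ) + ∑ i, (#(B i) : ℝ)
        ≤ (c⁻¹ + Fintype.card κ * (2 * exp (-(K / 2)))) * 2 ^ Fintype.card ι := by linarith
      _ < 2 ^ Fintype.card ι := mul_lt_of_lt_one_left (by positivity) hbudget
  obtain ⟨f, hf₀, hf⟩ := exists_forall_notMem_of_card_add_sum_card_lt B₀ B hcount
  simp only [B₀, B, mem_filter, mem_univ, true_and, not_lt] at hf₀ hf
  exact ⟨f, hf₀, hf⟩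

end SignVectors

lemma inv_one_add_one_div_add_mul_two_mul_exp_lt_one {m M : ℝ} (hmM : m ≤ M) (hM : 2 ≤ M) :
    (1 + 1 / M)⁻¹ + m * (2 * exp (-(8 * log M / 2))) < 1 := by
  have hM0 : 0 < M := by linarith
  have hexp : exp (-(8 * log M / 2)) = (M ^ 4)⁻¹ := by
    rw [show 8 * log M / 2 = log (M ^ 4) by rw [log_pow]; push_cast; ring, exp_neg,
      exp_log (by positivity)]
  rw [hexp, show (1 + 1 / M)⁻¹ = M / (M + 1) by field_simp]
  have htail : m * (2 * (M ^ 4)⁻¹) < 1 / (M + 1) := by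
    rw [lt_div_iff₀ (by positivity)]
    calc m * (2 * (M ^ 4)⁻¹) * (M + 1) ≤ M * (2 * (M ^ 4)⁻¹) * (M + 1) := by gcongr
      _ = 2 * (M + 1) / M ^ 3 := by field_simp
      _ < 1 := by
        rw [div_lt_one (by positivity)]
        nlinarith [mul_le_mul hM hM (by norm_num) hM0.le]
  calc M / (M + 1) + m * (2 * (M ^ 4)⁻¹) < M / (M + 1) + 1 / (M + 1) := by gcongr
    _ = 1 := by field_simp

/-- Sequential derandomization with importance-weighted averaging (existence form). -/
theorem sequential_derandomization_with_averaging :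
    ∃ C : ℝ, 0 < C ∧
      ∀ (m n : ℕ) (M : ℝ), (m : ℝ) ≤ M → 2 ≤ M →
        ∀ (A : Fin m → Fin n → ℝ) (imp : Fin m → ℝ), (∀ i, 0 ≤ imp i) →
          ∃ χ : Fin n → ℝ, (∀ j, χ j = 1 ∨ χ j = -1) ∧
            (∑ i, imp i * (∑ j, A i j * χ j) ^ 2
              ≤ (1 + 1 / M) * ∑ i, imp i * ∑ j, (A i j) ^ 2) ∧
            ∀ i : Fin m,
              (∑ j, A i j * χ j) ^ 2 ≤ C * Real.log M * ∑ j, (A i j) ^ 2 := by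
  refine ⟨8, by norm_num, fun m n M hmM hM A imp himp => ?_⟩
  have hlog : 0 ≤ 8 * log M := mul_nonneg (by norm_num) (log_nonneg (by linarith))
  obtain ⟨f, havg, hrows⟩ := exists_signs_sum_mul_sq_le_and_sq_le A himp
    (c := 1 + 1 / M) (by positivity) hlog
    (by rw [Fintype.card_fin]; exact inv_one_add_one_div_add_mul_two_mul_exp_lt_one hmM hM)
  exact ⟨fun j => signOf (f j), fun j => signOf_eq_one_or_neg_one _, havg, hrows⟩
end

section
/- Derandomized low-collision partition (existence form): Let n, M, T ∈ ℕ with M ≥ 3, R ⊆ [n], and let 𝒞 be a collection of at most M pairs (S, imp_S) with S ⊆ R and imp_S ≥ 0. Then there exists a partition Q₁ ⊔ Q₂ ⊔ … ⊔ Q_T = R such that (1) Σ_{(S,imp_S)∈𝒞} imp_S·Σ_{t=1}^T C(|S ∩ Q_t|,2) ≤ (2/T)·Σ_{(S,imp_S)∈𝒞} imp_S·C(|S|,2), and (2) |Q_t| ≤ max(1, 10·log(n)·|R|/T) for every t ∈ [T]. -/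
/-!
Hash `R` into `ZMod P` for a prime `|R| < P ≤ 2|R|` (Bertrand) and colour `x` by the residue
mod `T` of `u·x + v`, over all `u ≠ 0` and `v`. For `a ≠ b`, `(u, v) ↦ (u a + v, u b + v)` is a
bijection onto the off-diagonal pairs of `ZMod P`, so each pair of points of `R` collides for at
most a `2/T` fraction of the hash functions, and averaging the weighted collision count over the
family yields one hash that is at most `2/T` times the total. Every residue class mod `T` in
`ZMod P` has at most `P/T + 1 ≤ 2|R|/T + 1` elements, which bounds all parts. When `|R| ≤ T` an
injective colouring has no collisions at all.
-/

open Finset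

section Collisions

variable {α β : Type*} [Fintype β] [DecidableEq β]

theorem card_filter_offDiag_eq_sum (s : Finset α) (f : α → β) :
    #{p ∈ s.offDiag | f p.1 = f p.2} =
      ∑ b, #{x ∈ s | f x = b} * (#{x ∈ s | f x = b} - 1) := by
  rw [card_eq_sum_card_fiberwise (f := fun p => f p.1) (t := univ) (by simp)]
  refine sum_congr rfl fun b _ => ?_
  have : {p ∈ {p ∈ s.offDiag | f p.1 = f p.2} | f p.1 = b} = {x ∈ s | f x = b}.offDiag := by
    ext ⟨x, y⟩
    simp only [mem_filter, mem_offDiag]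
    grind
  rw [this, offDiag_card, Nat.mul_sub_one]

theorem sum_choose_two_card_fiber (s : Finset α) (f : α → β) :
    ∑ b, ((#{x ∈ s | f x = b}).choose 2 : ℝ) = #{p ∈ s.offDiag | f p.1 = f p.2} / 2 := by
  rw [card_filter_offDiag_eq_sum, Nat.cast_sum, sum_div]
  refine sum_congr rfl fun b _ => ?_
  rcases Nat.eq_zero_or_pos #{x ∈ s | f x = b} with h | h
  · simp [h]
  · rw [Nat.cast_choose_two, Nat.cast_mul, Nat.cast_pred h]

theorem card_filter_offDiag_le (s : Finset α) (f : α → β) {m : ℕ}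
    (hf : ∀ b, #{x ∈ s | f x = b} ≤ m) :
    #{p ∈ s.offDiag | f p.1 = f p.2} ≤ #s * (m - 1) := by
  rw [card_filter_offDiag_eq_sum, card_eq_sum_card_fiberwise (f := f) (t := univ) (by simp),
    sum_mul]
  gcongr with b
  exact hf b

end Collisions

theorem card_filter_le_one_of_injOn {α β : Type*} [DecidableEq β] {s : Finset α} {f : α → β}
    (hf : Set.InjOn f s) (b : β) : #{x ∈ s | f x = b} ≤ 1 :=
  card_le_one.mpr fun _ hx _ hy =>
    hf (mem_filter.1 hx).1 (mem_filter.1 hy).1 ((mem_filter.1 hx).2.trans (mem_filter.1 hy).2.symm)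

theorem exists_injOn_of_card_le {α β : Type*} [Fintype β] [Nonempty β] {s : Finset α}
    (h : #s ≤ Fintype.card β) : ∃ f : α → β, Set.InjOn f s := by
  classical
  obtain ⟨e⟩ := Function.Embedding.nonempty_of_card_le (α := s) (β := β) (by simpa using h)
  refine ⟨fun x => if hx : x ∈ s then e ⟨x, hx⟩ else Classical.arbitrary β, ?_⟩
  intro x hx y hy hxy
  simp only [dif_pos (mem_coe.1 hx), dif_pos (mem_coe.1 hy)] at hxy
  simpa using e.injective hxy

theorem exists_coloring_card_fiber_le_one {α : Type*} {R : Finset α} {T : ℕ} [NeZero T]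
    (h : #R ≤ T) : ∃ χ : α → Fin T, ∀ s ⊆ R, ∀ t, #{x ∈ s | χ x = t} ≤ 1 := by
  obtain ⟨χ, hχ⟩ := exists_injOn_of_card_le (β := Fin T) (by simpa using h)
  exact ⟨χ, fun s hs t => card_filter_le_one_of_injOn (hχ.mono hs) t⟩

theorem card_filter_affine_eq {F : Type*} [Field F] [Fintype F] [DecidableEq F] {a b : F}
    (hab : a ≠ b) (p : F → F → Prop) [DecidableRel p] :
    #{uv ∈ (univ.erase 0) ×ˢ univ | p (uv.1 * a + uv.2) (uv.1 * b + uv.2)} =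
      #{zw ∈ (univ : Finset F).offDiag | p zw.1 zw.2} := by
  have hab' : a - b ≠ 0 := sub_ne_zero.mpr hab
  refine card_nbij' (fun uv => (uv.1 * a + uv.2, uv.1 * b + uv.2))
    (fun zw => ((zw.1 - zw.2) / (a - b), zw.1 - (zw.1 - zw.2) / (a - b) * a)) ?_ ?_ ?_ ?_
  · rintro ⟨u, v⟩ h
    simp only [coe_filter, mem_product, mem_erase, mem_univ, and_true, Set.mem_ofPred_eq,
      mem_offDiag, true_and] at h ⊢
    refine ⟨fun h' => h.1 ?_, h.2⟩
    simpa [hab'] using (by linear_combination h' : u * (a - b) = 0)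
  · rintro ⟨z, w⟩ h
    simp only [coe_filter, mem_product, mem_erase, mem_univ, and_true, Set.mem_ofPred_eq,
      mem_offDiag, true_and] at h ⊢
    refine ⟨div_ne_zero (sub_ne_zero.mpr h.1) hab', ?_⟩
    convert h.2 using 2 <;> field_simp <;> ring
  · rintro ⟨u, v⟩ -
    simp only [Prod.mk.injEq]
    constructor <;> field_simp <;> ring
  · rintro ⟨z, w⟩ -
    simp only [Prod.mk.injEq]
    constructor <;> field_simp <;> ring

theorem card_filter_ofNat_val_eq_le (P T : ℕ) [NeZero P] [NeZero T] (t : Fin T) :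
    #{z : ZMod P | Fin.ofNat T z.val = t} ≤ P / T + 1 := by
  refine (card_le_card_of_injOn (t := range (P / T + 1)) (fun z => z.val / T) ?_ ?_).trans
    (card_range _).le
  · intro z _
    simpa [Nat.lt_succ_iff] using Nat.div_le_div_right (ZMod.val_lt z).le
  · intro z hz w hw h
    simp only [coe_filter, mem_univ, true_and, Set.mem_ofPred_eq, Fin.ext_iff, Fin.val_ofNat]
      at hz hw
    apply ZMod.val_injective
    simp only at h
    rw [← Nat.div_add_mod z.val T, ← Nat.div_add_mod w.val T, hz, hw, h]

section Averaging

variable {ι α β K : Type*} [Fintype β] [DecidableEq β] [Fintype K]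

theorem sum_sum_choose_two_card_fiber_le (I : Finset ι) (χ : ι → α → β) (s : Finset α) {ε : ℝ}
    (hcoll : ∀ x ∈ s, ∀ y ∈ s, x ≠ y → (#{i ∈ I | χ i x = χ i y} : ℝ) ≤ ε * #I) :
    ∑ i ∈ I, ∑ b, ((#{x ∈ s | χ i x = b}).choose 2 : ℝ) ≤ ε * #I * (#s).choose 2 := by
  have hcount : ∑ i ∈ I, #{p ∈ s.offDiag | χ i p.1 = χ i p.2} =
      ∑ p ∈ s.offDiag, #{i ∈ I | χ i p.1 = χ i p.2} :=
    sum_card_bipartiteAbove_eq_sum_card_bipartiteBelow (fun i (p : α × α) => χ i p.1 = χ i p.2)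
  calc ∑ i ∈ I, ∑ b, ((#{x ∈ s | χ i x = b}).choose 2 : ℝ)
      = (∑ p ∈ s.offDiag, (#{i ∈ I | χ i p.1 = χ i p.2} : ℝ)) / 2 := by
        simp only [sum_choose_two_card_fiber, ← sum_div]
        exact_mod_cast congrArg (fun n : ℕ => (n : ℝ) / 2) hcount
    _ ≤ (∑ _p ∈ s.offDiag, ε * #I) / 2 := by
        gcongr with p hp
        obtain ⟨hx, hy, hxy⟩ := mem_offDiag.1 hp
        exact hcoll _ hx _ hy hxy
    _ = ε * #I * (#s).choose 2 := by
        rw [sum_const, nsmul_eq_mul, offDiag_card, Nat.cast_choose_two,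
          Nat.cast_sub (Nat.le_mul_self _), Nat.cast_mul]
        ring

theorem exists_mem_weighted_sum_choose_two_le {I : Finset ι} (hI : I.Nonempty)
    (χ : ι → α → β) (S : K → Finset α) {w : K → ℝ} (hw : ∀ k, 0 ≤ w k) {ε : ℝ}
    (hcoll : ∀ k, ∀ x ∈ S k, ∀ y ∈ S k, x ≠ y → (#{i ∈ I | χ i x = χ i y} : ℝ) ≤ ε * #I) :
    ∃ i ∈ I, ∑ k, w k * ∑ b, ((#{x ∈ S k | χ i x = b}).choose 2 : ℝ) ≤
      ε * ∑ k, w k * (#(S k)).choose 2 := by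
  refine exists_le_of_sum_le hI ?_
  calc ∑ i ∈ I, ∑ k, w k * ∑ b, ((#{x ∈ S k | χ i x = b}).choose 2 : ℝ)
      = ∑ k, w k * ∑ i ∈ I, ∑ b, ((#{x ∈ S k | χ i x = b}).choose 2 : ℝ) := by
        rw [sum_comm]; simp only [mul_sum]
    _ ≤ ∑ k, w k * (ε * #I * (#(S k)).choose 2) := by
        gcongr with k
        · exact hw k
        · exact sum_sum_choose_two_card_fiber_le I χ (S k) (hcoll k)
    _ = ∑ _i ∈ I, ε * ∑ k, w k * (#(S k)).choose 2 := by
        rw [sum_const, nsmul_eq_mul, mul_sum, mul_sum]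
        refine sum_congr rfl fun k _ => ?_
        ring

end Averaging

theorem exists_coloring_card_fiber_le_and_weighted_sum_choose_two_le
    {α K : Type*} [Fintype K] {R : Finset α} (hR : R.Nonempty) (T : ℕ) [NeZero T]
    (S : K → Finset α) (hS : ∀ k, S k ⊆ R) {w : K → ℝ} (hw : ∀ k, 0 ≤ w k) :
    ∃ χ : α → Fin T, (∀ t, (#{x ∈ R | χ x = t} : ℝ) ≤ 2 * #R / T + 1) ∧
      ∑ k, w k * ∑ t, ((#{x ∈ S k | χ x = t}).choose 2 : ℝ) ≤
        2 / T * ∑ k, w k * (#(S k)).choose 2 := by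
  obtain ⟨P, hP, hRP, hPR⟩ := Nat.exists_prime_lt_and_le_two_mul #R hR.card_pos.ne'
  have := Fact.mk hP
  obtain ⟨ι, hι⟩ := exists_injOn_of_card_le (β := ZMod P) (s := R) (by simpa using hRP.le)
  let I : Finset (ZMod P × ZMod P) := (univ.erase 0) ×ˢ univ
  let residue : ZMod P → Fin T := fun z => Fin.ofNat T z.val
  let χ : ZMod P × ZMod P → α → Fin T := fun uv x => residue (uv.1 * ι x + uv.2)
  have hT : (0 : ℝ) < T := by simpa using Nat.pos_of_neZero T
  have hP2 : (2 : ℝ) ≤ P := by exact_mod_cast hP.two_le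
  have hPT : ((P / T : ℕ) : ℝ) ≤ P / T := Nat.cast_div_le
  have hI : (#I : ℝ) = (P - 1) * P := by
    simp [I, card_univ, ZMod.card, Nat.cast_sub hP.one_le]
  have hcoll : ∀ x ∈ R, ∀ y ∈ R, x ≠ y → (#{uv ∈ I | χ uv x = χ uv y} : ℝ) ≤ 2 / T * #I := by
    intro x hx y hy hxy
    have hcount : #{uv ∈ I | χ uv x = χ uv y} ≤ P * (P / T) := by
      rw [card_filter_affine_eq (hι.ne hx hy hxy) (fun z w => residue z = residue w)]
      simpa [card_univ, ZMod.card] using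
        card_filter_offDiag_le univ residue (card_filter_ofNat_val_eq_le P T)
    calc (#{uv ∈ I | χ uv x = χ uv y} : ℝ) ≤ P * (P / T : ℕ) := by exact_mod_cast hcount
      _ ≤ P * (P / T) := by gcongr
      _ ≤ 2 / T * #I := by
          rw [hI]
          field_simp
          nlinarith
  obtain ⟨uv, huv, hle⟩ := exists_mem_weighted_sum_choose_two_le ⟨(1, 0), by simp [I]⟩ χ S hw
    fun k x hx y hy => hcoll x (hS k hx) y (hS k hy)
  refine ⟨χ uv, fun t => ?_, hle⟩
  have hu : uv.1 ≠ 0 := (mem_erase.1 (mem_product.1 huv).1).1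
  have hfiber : #{x ∈ R | χ uv x = t} ≤ P / T + 1 := by
    refine (card_le_card_of_injOn (fun x => uv.1 * ι x + uv.2) ?_ ?_).trans
      (card_filter_ofNat_val_eq_le P T t)
    · intro x hx
      simp only [coe_filter, mem_univ, true_and, Set.mem_ofPred_eq]
      exact (mem_filter.1 hx).2
    · intro x hx y hy h
      exact hι (mem_filter.1 hx).1 (mem_filter.1 hy).1 (mul_left_cancel₀ hu (add_right_cancel h))
  calc (#{x ∈ R | χ uv x = t} : ℝ) ≤ (P / T : ℕ) + 1 := by exact_mod_cast hfiber
    _ ≤ P / T + 1 := by gcongr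
    _ ≤ 2 * #R / T + 1 := by gcongr; exact_mod_cast hPR

theorem two_mul_div_add_one_le_ten_mul_log_mul_div {n r T : ℕ} (hT : 0 < T) (hTr : T < r)
    (hrn : r ≤ n) : (2 * r / T + 1 : ℝ) ≤ 10 * Real.log n * r / T := by
  have hT' : (0 : ℝ) < T := by exact_mod_cast hT
  have hTr' : (T : ℝ) + 1 ≤ r := by exact_mod_cast hTr
  have hlog : (3 : ℝ) ≤ 10 * Real.log n := by
    have := Real.log_le_log (by norm_num) (by exact_mod_cast (by omega : 2 ≤ n) : (2 : ℝ) ≤ n)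
    linarith [Real.log_two_gt_d9]
  rw [div_add_one hT'.ne', div_le_div_iff_of_pos_right hT']
  nlinarith

theorem low_collision_partition_exists_general (n T K : ℕ) (hT : 1 ≤ T)
    (R : Finset (Fin n))
    (C : Fin K → Finset (Fin n) × ℝ)
    (hC : ∀ i, (C i).1 ⊆ R ∧ 0 ≤ (C i).2) :
    ∃ Q : Fin T → Finset (Fin n),
      (∀ t, Q t ⊆ R) ∧
      (∀ t t', t ≠ t' → Disjoint (Q t) (Q t')) ∧
      (Finset.univ.biUnion Q = R) ∧
      (∑ i, (C i).2 * ∑ t, (((C i).1 ∩ Q t).card.choose 2 : ℝ)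
        ≤ (2 / T) * ∑ i, (C i).2 * ((C i).1.card.choose 2 : ℝ)) ∧
      (∀ t, ((Q t).card : ℝ) ≤ max 1 (10 * Real.log n * R.card / T)) := by
  have : NeZero T := ⟨by omega⟩
  have hRn : #R ≤ n := card_le_univ R |>.trans_eq (Fintype.card_fin n)
  obtain ⟨χ, hsize, hcoll⟩ : ∃ χ : Fin n → Fin T,
      (∀ t, (#{x ∈ R | χ x = t} : ℝ) ≤ max 1 (10 * Real.log n * #R / T)) ∧
      ∑ i, (C i).2 * ∑ t, ((#{x ∈ (C i).1 | χ x = t}).choose 2 : ℝ) ≤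
        2 / T * ∑ i, (C i).2 * (#(C i).1).choose 2 := by
    rcases le_or_gt #R T with hRT | hTR
    · obtain ⟨χ, hχ⟩ := exists_coloring_card_fiber_le_one hRT
      refine ⟨χ, fun t => le_max_of_le_left (by exact_mod_cast hχ R le_rfl t), ?_⟩
      simp only [Nat.choose_eq_zero_of_lt (Nat.lt_succ_of_le (hχ _ (hC _).1 _)),
        Nat.cast_zero, sum_const_zero, mul_zero]
      exact mul_nonneg (by positivity) (sum_nonneg fun i _ => mul_nonneg (hC i).2 (by positivity))
    · obtain ⟨χ, hsize, hcoll⟩ := exists_coloring_card_fiber_le_and_weighted_sum_choose_two_le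
        (card_pos.1 (by omega)) T _ (fun i => (hC i).1) (fun i => (hC i).2)
      exact ⟨χ, fun t => (hsize t).trans <| le_max_of_le_right <|
        two_mul_div_add_one_le_ten_mul_log_mul_div hT hTR hRn, hcoll⟩
  refine ⟨fun t => {x ∈ R | χ x = t}, fun t => filter_subset _ _, ?_,
    biUnion_filter_eq_of_maps_to fun _ _ => mem_univ _, ?_, hsize⟩
  · intro t t' htt'
    exact disjoint_filter.2 fun x _ hx hx' => htt' (hx.symm.trans hx')
  · simpa only [inter_filter, inter_eq_left.2 (hC _).1] using hcoll

/-- Derandomized low-collision partition (existence form). -/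
theorem low_collision_partition_exists (n M T K : ℕ) (hM : 3 ≤ M) (hT : 1 ≤ T)
    (hK : K ≤ M) (R : Finset (Fin n))
    (C : Fin K → Finset (Fin n) × ℝ)
    (hC : ∀ i, (C i).1 ⊆ R ∧ 0 ≤ (C i).2) :
    ∃ Q : Fin T → Finset (Fin n),
      (∀ t, Q t ⊆ R) ∧
      (∀ t t', t ≠ t' → Disjoint (Q t) (Q t')) ∧
      (Finset.univ.biUnion Q = R) ∧
      (∑ i, (C i).2 * ∑ t, (((C i).1 ∩ Q t).card.choose 2 : ℝ)
        ≤ (2 / T) * ∑ i, (C i).2 * ((C i).1.card.choose 2 : ℝ)) ∧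
      (∀ t, ((Q t).card : ℝ) ≤ max 1 (10 * Real.log n * R.card / T)) :=
  low_collision_partition_exists_general n T K hT R C hC
end

section
/- Lattice approximation existence: Let A be an m×n matrix with entries aᵢⱼ ∈ [0,1] and let p ∈ [0,1]ⁿ, with m ≥ 2. Then there exists q ∈ {0,1}ⁿ such that for every i ∈ [m], |Σ_{j=1}ⁿ aᵢⱼqⱼ − Σ_{j=1}ⁿ aᵢⱼpⱼ| ≤ C·(√(μᵢ·log m) + log m), where μᵢ = Σ_{j=1}ⁿ aᵢⱼpⱼ and C > 0 is an absolute constant. -/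
open Finset Real

/-!
Round each coordinate independently, `q j = 1` with probability `p j`. For a row `a ∈ [0,1]ⁿ`
with mean `μ = ∑ a j p j`, the moment generating function of the deviation
`S = ∑ a j (q j - p j)` satisfies `E[exp (t S)] ≤ exp (μ t²)` for `|t| ≤ 1`; choosing
`t = min 1 √(L / μ)` in Markov's inequality gives `P(|S| > 2√(μ L) + 2 L) ≤ 2 e^{-L}`.
With `L = 3 log m` the union bound over the `m` rows leaves total failure probability
`2 / m² < 1`, so some rounding satisfies every row with `C = 6`.
The probability space is `ι → Bool` with the explicit product weight `bernoulliWeight`.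
-/

theorem bernoulli_mgf_le_exp_sq {a p t : ℝ} (ha : 0 ≤ a) (ha1 : a ≤ 1) (hp : 0 ≤ p)
    (ht : |t| ≤ 1) :
    (1 - p) * exp (-(a * p * t)) + p * exp (a * (1 - p) * t) ≤ exp (a * p * t ^ 2) := by
  have hconv : exp (a * t) ≤ 1 + a * (exp t - 1) := by
    have h := convexOn_exp.2 (Set.mem_univ t) (Set.mem_univ 0) ha (sub_nonneg.2 ha1)
      (add_sub_cancel a 1)
    simp only [smul_eq_mul, mul_zero, add_zero, exp_zero, mul_one] at h
    linarith
  have hquad : exp t - 1 - t ≤ t ^ 2 := (le_abs_self _).trans (abs_exp_sub_one_sub_id_le ht)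
  have hap : 0 ≤ a * p := mul_nonneg ha hp
  calc (1 - p) * exp (-(a * p * t)) + p * exp (a * (1 - p) * t)
      = exp (-(a * p * t)) * (1 + p * (exp (a * t) - 1)) := by
        rw [show a * (1 - p) * t = -(a * p * t) + a * t by ring, exp_add]; ring
    _ ≤ exp (-(a * p * t)) * exp (a * p * (exp t - 1)) := by
        gcongr
        nlinarith [add_one_le_exp (a * p * (exp t - 1))]
    _ = exp (a * p * (exp t - 1 - t)) := by rw [← exp_add]; ring_nf
    _ ≤ exp (a * p * t ^ 2) := by gcongr

theorem sum_filter_lt_le_exp_mul_sum {Ω : Type*} [Fintype Ω] {w : Ω → ℝ} (hw : ∀ q, 0 ≤ w q)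
    (f : Ω → ℝ) (lam : ℝ) {t : ℝ} (ht : 0 ≤ t) :
    ∑ q ∈ univ.filter (fun q => lam < f q), w q ≤ exp (-(t * lam)) * ∑ q, w q * exp (t * f q) := by
  rw [mul_sum]
  calc ∑ q ∈ univ.filter (fun q => lam < f q), w q
      ≤ ∑ q ∈ univ.filter (fun q => lam < f q), exp (-(t * lam)) * (w q * exp (t * f q)) := by
        refine sum_le_sum fun q hq => ?_
        have hlt : lam < f q := (mem_filter.1 hq).2
        have : 1 ≤ exp (-(t * lam)) * exp (t * f q) := by
          rw [← exp_add]; exact one_le_exp (by nlinarith)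
        nlinarith [hw q]
    _ ≤ ∑ q, exp (-(t * lam)) * (w q * exp (t * f q)) :=
        sum_le_sum_of_subset_of_nonneg (filter_subset _ _) fun q _ _ => by have := hw q; positivity

theorem exists_chernoff_parameter {μ L : ℝ} (hL : 0 < L) :
    ∃ t : ℝ, 0 < t ∧ t ≤ 1 ∧ μ * t ^ 2 - t * (2 * √(μ * L) + 2 * L) ≤ -L := by
  rcases le_or_gt μ L with hle | hgt
  · exact ⟨1, one_pos, le_rfl, by nlinarith [sqrt_nonneg (μ * L)]⟩
  · have hμ0 : 0 < μ := hL.trans hgt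
    refine ⟨√(L / μ), by positivity, sqrt_le_one.2 ((div_le_one hμ0).2 hgt.le), ?_⟩
    have hsq : μ * √(L / μ) ^ 2 = L := by rw [sq_sqrt (by positivity)]; field_simp
    have hmul : √(L / μ) * √(μ * L) = L := by
      rw [← sqrt_mul (by positivity), show L / μ * (μ * L) = L ^ 2 by field_simp]
      exact sqrt_sq hL.le
    nlinarith [sqrt_nonneg (L / μ)]

theorem exists_forall_notMem_of_sum_lt {Ω ι : Type*} [Fintype Ω] [Fintype ι] {w : Ω → ℝ}
    (hw : ∀ q, 0 ≤ w q) (B : ι → Finset Ω) (h : ∑ i, ∑ q ∈ B i, w q < ∑ q, w q) :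
    ∃ q, ∀ i, q ∉ B i := by
  classical
  by_contra! hcover
  refine h.not_ge ?_
  calc ∑ q, w q ≤ ∑ q, ∑ i, if q ∈ B i then w q else 0 := sum_le_sum fun q _ => by
        obtain ⟨i, hi⟩ := hcover q
        calc w q = if q ∈ B i then w q else 0 := (if_pos hi).symm
          _ ≤ ∑ j, if q ∈ B j then w q else 0 :=
            single_le_sum (f := fun j => if q ∈ B j then w q else 0)
              (fun j _ => by split_ifs <;> simp [hw q]) (mem_univ i)
    _ = ∑ i, ∑ q ∈ B i, w q := by rw [sum_comm]; simp [sum_ite_mem]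

section Bernoulli

variable {ι : Type*} [Fintype ι]

noncomputable def bernoulliWeight (p : ι → ℝ) (q : ι → Bool) : ℝ :=
  ∏ j, if q j then p j else 1 - p j

theorem bernoulliWeight_nonneg {p : ι → ℝ} (hp : ∀ j, 0 ≤ p j ∧ p j ≤ 1) (q : ι → Bool) :
    0 ≤ bernoulliWeight p q :=
  prod_nonneg fun j _ => by split_ifs <;> linarith [hp j]

theorem sum_bernoulliWeight_mul_prod [DecidableEq ι] (p : ι → ℝ) (f : ι → Bool → ℝ) :
    ∑ q, bernoulliWeight p q * ∏ j, f j (q j) = ∏ j, ((1 - p j) * f j false + p j * f j true) := by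
  simp_rw [bernoulliWeight, ← prod_mul_distrib]
  rw [← Fintype.prod_sum fun j b => (if b then p j else 1 - p j) * f j b]
  simp [add_comm]

theorem sum_bernoulliWeight [DecidableEq ι] (p : ι → ℝ) : ∑ q, bernoulliWeight p q = 1 := by
  simpa using sum_bernoulliWeight_mul_prod p fun _ _ => 1

theorem sum_bernoulliWeight_mul_exp_le [DecidableEq ι] {a p : ι → ℝ}
    (ha : ∀ j, 0 ≤ a j ∧ a j ≤ 1) (hp : ∀ j, 0 ≤ p j ∧ p j ≤ 1) {t : ℝ} (ht : |t| ≤ 1) :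
    ∑ q, bernoulliWeight p q * exp (t * ∑ j, a j * ((if q j then 1 else 0) - p j))
      ≤ exp ((∑ j, a j * p j) * t ^ 2) := by
  simp_rw [mul_sum, exp_sum]
  refine (sum_bernoulliWeight_mul_prod p
    fun j b => exp (t * (a j * ((if b then 1 else 0) - p j)))).trans_le ?_
  rw [sum_mul, exp_sum]
  refine prod_le_prod (fun j _ => ?_) fun j _ => ?_
  · have := hp j
    exact add_nonneg (mul_nonneg (by linarith) (exp_nonneg _)) (mul_nonneg this.1 (exp_nonneg _))
  · refine le_of_eq_of_le ?_ (bernoulli_mgf_le_exp_sq (ha j).1 (ha j).2 (hp j).1 ht)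
    simp only [Bool.false_eq_true, if_false, if_true]
    ring_nf

theorem sum_bernoulliWeight_filter_deviation_le [DecidableEq ι] {a p : ι → ℝ}
    (ha : ∀ j, 0 ≤ a j ∧ a j ≤ 1) (hp : ∀ j, 0 ≤ p j ∧ p j ≤ 1) {L : ℝ} (hL : 0 < L) :
    ∑ q ∈ univ.filter (fun q => 2 * √((∑ j, a j * p j) * L) + 2 * L
        < |∑ j, a j * ((if q j then 1 else 0) - p j)|), bernoulliWeight p q ≤ 2 * exp (-L) := by
  set μ := ∑ j, a j * p j
  set S : (ι → Bool) → ℝ := fun q => ∑ j, a j * ((if q j then 1 else 0) - p j)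
  set lam := 2 * √(μ * L) + 2 * L
  have hw := bernoulliWeight_nonneg hp
  obtain ⟨t, ht0, ht1, hexp⟩ := exists_chernoff_parameter (μ := μ) hL
  have tail (s : ℝ) (hs : |s| = 1) :
      ∑ q ∈ univ.filter (fun q => lam < s * S q), bernoulliWeight p q ≤ exp (-L) := calc
    _ ≤ exp (-(t * lam)) * ∑ q, bernoulliWeight p q * exp (t * (s * S q)) :=
        sum_filter_lt_le_exp_mul_sum hw _ _ ht0.le
    _ ≤ exp (-(t * lam)) * exp (μ * t ^ 2) := by
        gcongr
        have hst : |t * s| ≤ 1 := by rw [abs_mul, hs, abs_of_pos ht0]; linarith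
        simpa only [← mul_assoc, mul_pow, ← sq_abs s, hs, one_pow, mul_one]
          using sum_bernoulliWeight_mul_exp_le ha hp hst
    _ ≤ exp (-L) := by rw [← exp_add]; exact exp_le_exp.2 (by linarith)
  calc _ ≤ ∑ q ∈ univ.filter (fun q => lam < 1 * S q), bernoulliWeight p q
        + ∑ q ∈ univ.filter (fun q => lam < -1 * S q), bernoulliWeight p q := by
        simp only [sum_filter, ← sum_add_distrib]
        refine sum_le_sum fun q _ => ?_
        have := hw q
        split_ifs <;> grind [lt_abs]
    _ ≤ 2 * exp (-L) := by linarith [tail 1 (by simp), tail (-1) (by simp)]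

theorem exists_rounding_forall_abs_sub_le {κ : Type*} [Fintype κ] [DecidableEq ι]
    {A : κ → ι → ℝ} {p : ι → ℝ} (hA : ∀ i j, 0 ≤ A i j ∧ A i j ≤ 1)
    (hp : ∀ j, 0 ≤ p j ∧ p j ≤ 1) {L : ℝ} (hL : 0 < L)
    (hfail : 2 * Fintype.card κ * exp (-L) < 1) :
    ∃ q : ι → Bool, ∀ i, |∑ j, A i j * (if q j then 1 else 0) - ∑ j, A i j * p j|
      ≤ 2 * √((∑ j, A i j * p j) * L) + 2 * L := by
  have hsum : ∑ i, ∑ q ∈ univ.filter (fun q => 2 * √((∑ j, A i j * p j) * L) + 2 * L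
      < |∑ j, A i j * ((if q j then 1 else 0) - p j)|), bernoulliWeight p q
      < ∑ q, bernoulliWeight p q := calc
    _ ≤ ∑ _i : κ, 2 * exp (-L) :=
        sum_le_sum fun i _ => sum_bernoulliWeight_filter_deviation_le (hA i) hp hL
    _ < ∑ q, bernoulliWeight p q := by
        rw [sum_const, card_univ, nsmul_eq_mul, sum_bernoulliWeight]; linarith
  obtain ⟨q, hq⟩ := exists_forall_notMem_of_sum_lt (bernoulliWeight_nonneg hp) _ hsum
  refine ⟨q, fun i => ?_⟩
  simpa only [mem_filter, mem_univ, true_and, not_lt, mul_sub, sum_sub_distrib] using hq i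

end Bernoulli

/-- Lattice approximation existence (randomized rounding for linear programs). -/
theorem lattice_approximation_exists :
    ∃ C : ℝ, 0 < C ∧
      ∀ (m n : ℕ), 2 ≤ m →
        ∀ (A : Fin m → Fin n → ℝ) (p : Fin n → ℝ),
          (∀ i j, 0 ≤ A i j ∧ A i j ≤ 1) →
          (∀ j, 0 ≤ p j ∧ p j ≤ 1) →
          ∃ q : Fin n → ℝ, (∀ j, q j = 0 ∨ q j = 1) ∧
            ∀ i : Fin m,
              |∑ j, A i j * q j - ∑ j, A i j * p j|
                ≤ C * (Real.sqrt ((∑ j, A i j * p j) * Real.log m) + Real.log m) := by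
  refine ⟨6, by norm_num, fun m n hm A p hA hp => ?_⟩
  have hm' : (2 : ℝ) ≤ m := by exact_mod_cast hm
  have hlog : 0 < log m := log_pos (by linarith)
  have hfail : 2 * Fintype.card (Fin m) * exp (-(3 * log m)) < 1 := by
    rw [Fintype.card_fin, ← log_rpow (by linarith), exp_neg, exp_log (by positivity)]
    have : (2 : ℝ) * m < (m : ℝ) ^ (3 : ℝ) := by
      rw [show (3 : ℝ) = (3 : ℕ) by norm_num, rpow_natCast]
      nlinarith [mul_le_mul hm' hm' zero_le_two (by linarith)]
    rwa [← div_eq_mul_inv, div_lt_one (by positivity)]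
  obtain ⟨q, hq⟩ := exists_rounding_forall_abs_sub_le hA hp (by positivity) hfail
  refine ⟨fun j => if q j then 1 else 0, fun j => by cases q j <;> simp, fun i => ?_⟩
  have hsqrt : √((∑ j, A i j * p j) * (3 * log m)) ≤ 3 * √((∑ j, A i j * p j) * log m) := by
    rw [mul_left_comm, sqrt_mul zero_le_three]
    gcongr
    nlinarith [sq_sqrt (zero_le_three (α := ℝ)), sqrt_nonneg 3]
  linarith [hq i]
end
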